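/- arXiv:1508.05157 — 4 statements merged into one kernel-verified Lean document; each statement's English description precedes it below -/
import Mathlib

section
/- For a forest F with n vertices, the inversion enumerator summed over all labelings equals (n!/∏_v h_v) · ∏_v [h_v]_q, where [m]_q = 1 + q + ... + q^{m-1}. -/
open Finset

open scoped Classical

noncomputable section

variable {n : ℕ}

/-- `u <_F v` : strictly below in the forest order. -/
def strictR (r : Fin n → Fin n → Prop) (u v : Fin n) : Prop := r u v ∧ u ≠ v

/-- A naturally indexed plane forest structure on `Fin n`: a partial order whose
principal up-sets are chains (roots maximal), with natural indexing. -/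
def IsForest (r : Fin n → Fin n → Prop) : Prop :=
  IsPartialOrder (Fin n) r ∧ (∀ v u u', r v u → r v u' → r u u' ∨ r u' u) ∧
    ∀ u v, r u v → u ≤ v

/-- `h_v`: size of the principal order ideal generated by `v`. -/
def hook (r : Fin n → Fin n → Prop) (v : Fin n) : ℕ :=
  (univ.filter fun u => r u v).card

/-- q-integer `[m] = 1 + q + ... + q^(m-1)`. -/
def qInt {R : Type*} [CommRing R] (q : R) (m : ℕ) : R := ∑ i ∈ Finset.range m, q ^ i

/-- inversions of an (unsigned) labeling. -/
def invF (r : Fin n → Fin n → Prop) (w : Equiv.Perm (Fin n)) : ℕ :=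
  (univ.filter fun uv : Fin n × Fin n => strictR r uv.1 uv.2 ∧ w uv.2 < w uv.1).card

/-- a natural (order-preserving) labeling. -/
def NaturalL (r : Fin n → Fin n → Prop) (w : Equiv.Perm (Fin n)) : Prop :=
  ∀ u v, strictR r u v → w u < w v

/-- bottom-to-top maximum positions. -/
def BtmaxF (r : Fin n → Fin n → Prop) (w : Equiv.Perm (Fin n)) : Finset (Fin n) :=
  univ.filter fun v => ∀ u, strictR r u v → w u < w v

/-- label (in 1..n, with convention n+1 for roots) of the parent of `v`;
for a naturally indexed forest the parent of `v` is the minimal-index vertex strictly above `v`. -/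
def parentW (r : Fin n → Fin n → Prop) (w : Equiv.Perm (Fin n)) (v : Fin n) : ℕ :=
  if h : (univ.filter fun u => strictR r v u).Nonempty then
    (w ((univ.filter fun u => strictR r v u).min' h) : ℕ) + 1
  else n + 1

/-- major index: sum of hooks over descents. -/
def majF (r : Fin n → Fin n → Prop) (w : Equiv.Perm (Fin n)) : ℕ :=
  ∑ v ∈ univ.filter (fun v => parentW r w v < (w v : ℕ) + 1), hook r v

/-- M-code of a labeled forest. -/
def mcodeF (r : Fin n → Fin n → Prop) (w : Equiv.Perm (Fin n)) (i : Fin n) : ℕ :=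
  if (w i : ℕ) + 1 < parentW r w i then
    (univ.filter fun u => strictR r u i ∧ (w i : ℕ) + 1 ≤ (w u : ℕ) + 1 ∧
      (w u : ℕ) + 1 ≤ parentW r w i).card
  else
    (univ.filter fun u => strictR r u i ∧ ¬(parentW r w i ≤ (w u : ℕ) + 1 ∧
      (w u : ℕ) + 1 ≤ (w i : ℕ) + 1)).card

/-- cyclic bottom-to-top maxima. -/
def CbtmaxF (r : Fin n → Fin n → Prop) (w : Equiv.Perm (Fin n)) : Finset (Fin n) :=
  univ.filter fun v =>
    if (w v : ℕ) + 1 < parentW r w v then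
      ∀ u, strictR r u v → ¬((w v : ℕ) + 1 ≤ (w u : ℕ) + 1 ∧ (w u : ℕ) + 1 ≤ parentW r w v)
    else
      ∀ u, strictR r u v → (parentW r w v ≤ (w u : ℕ) + 1 ∧ (w u : ℕ) + 1 ≤ (w v : ℕ) + 1)

/-! ### Signed labelings, encoded as a permutation together with a sign function.
`wVal (σ, ε)` is the corresponding signed labeling `V(F) → {±1, …, ±n}`;
this is a bijective encoding of the set `W_B(F)` of signed labelings. -/

def wVal (p : Equiv.Perm (Fin n) × (Fin n → Bool)) (v : Fin n) : ℤ :=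
  (if p.2 v then -1 else 1) * ((p.1 v : ℤ) + 1)

/-- number of negative labels. -/
def n1F (w : Fin n → ℤ) : ℕ := (univ.filter fun v => w v < 0).card

/-- inversions of a signed labeling. -/
def invSF (r : Fin n → Fin n → Prop) (w : Fin n → ℤ) : ℕ :=
  (univ.filter fun uv : Fin n × Fin n => strictR r uv.1 uv.2 ∧ w uv.2 < w uv.1).card

def n2F (r : Fin n → Fin n → Prop) (w : Fin n → ℤ) : ℕ :=
  (univ.filter fun uv : Fin n × Fin n => strictR r uv.1 uv.2 ∧ w uv.1 + w uv.2 < 0).card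

def invBF (r : Fin n → Fin n → Prop) (w : Fin n → ℤ) : ℕ := invSF r w + n1F w + n2F r w

def invDF (r : Fin n → Fin n → Prop) (w : Fin n → ℤ) : ℕ := invSF r w + n2F r w

/-- the A-code of a signed labeled forest. -/
def acodeF (r : Fin n → Fin n → Prop) (w : Fin n → ℤ) (i : Fin n) : ℕ :=
  (univ.filter fun u => strictR r u i ∧ w i < w u).card +
  (univ.filter fun u => strictR r u i ∧ w u + w i < 0).card +
  (if w i < 0 then 1 else 0)

/-- signed bottom-to-top maximum positions. -/
def BtmaxBF (r : Fin n → Fin n → Prop) (w : Fin n → ℤ) : Finset (Fin n) :=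
  univ.filter fun v => 0 < w v ∧ ∀ u, strictR r u v → |w u| < w v

def leafF (r : Fin n → Fin n → Prop) (v : Fin n) : Prop := ∀ u, ¬ strictR r u v

/-- type D bottom-to-top maximum positions. -/
def BtmaxDF (r : Fin n → Fin n → Prop) (w : Fin n → ℤ) : Finset (Fin n) :=
  univ.filter fun v => ¬ leafF r v ∧ 0 < w v ∧ ∀ u, strictR r u v → |w u| < w v

/-! ### The map φ: one sorting step towards a natural labeling, recording the A-code. -/

def stepA (r : Fin n → Fin n → Prop) (i : Fin n) (w : Fin n → ℤ) : Fin n → ℤ :=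
  let A := (univ.filter fun u => r u i).image fun u => (w u).natAbs
  let M := A.max.getD 0
  let l := (A.erase M).sort (· ≤ ·)
  fun u =>
    if u = i then (M : ℤ)
    else if strictR r u i then
      (if w u < 0 then -1 else 1) *
        (l.getD ((univ.filter fun u' => strictR r u' i ∧ (w u').natAbs < (w u).natAbs).card) 0)
    else w u

/-- processing vertices `v_n, v_{n-1}, …, v_1` yields the natural labeling `w'`. -/
def sortA (r : Fin n → Fin n → Prop) (w : Fin n → ℤ) : Fin n → ℤ :=
  ((List.finRange n).reverse).foldl (fun w i => stepA r i w) w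

/-! ### The sorting algorithm for the sorting index. -/

/-- standardized label of `x` in the subtree rooted at `u`. -/
def stdVal (r : Fin n → Fin n → Prop) (u : Fin n) (w : Fin n → ℤ) (x : Fin n) : ℤ :=
  (if w x < 0 then -1 else 1) * (((univ.filter fun y => r y u ∧ |w y| < |w x|).card : ℤ) + 1)

/-- one step of the forest sorting algorithm (placing value `i+1`); the state is
(current labeling, recorded B-code, running total). -/
def sortStepB (r : Fin n → Fin n → Prop) (i : Fin n)
    (s : (Fin n → ℤ) × (Fin n → ℤ) × ℤ) : (Fin n → ℤ) × (Fin n → ℤ) × ℤ :=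
  let w := s.1
  let v := ((univ.filter fun x => |w x| = (i : ℤ) + 1).max).getD i
  let u := ((univ.filter fun x => r v x ∧ |w x| ≤ (i : ℤ) + 1).max).getD i
  let amt : ℤ := |stdVal r u w v| - stdVal r u w u - (if w u < 0 then 1 else 0)
  let w' := if 0 < w v then Function.update (Function.update w u (w v)) v (w u)
            else Function.update (Function.update w u (-(w v))) v (-(w u))
  (w', Function.update s.2.1 u amt, s.2.2 + amt)

def runB (r : Fin n → Fin n → Prop) (w : Fin n → ℤ) : (Fin n → ℤ) × (Fin n → ℤ) × ℤ :=
  ((List.finRange n).reverse).foldl (fun s i => sortStepB r i s) (w, fun _ => (0 : ℤ), 0)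

/-- the natural labeling produced by the sorting algorithm. -/
def sortedB (r : Fin n → Fin n → Prop) (w : Fin n → ℤ) : Fin n → ℤ := (runB r w).1

/-- B-code: `b_i` = amount contributed at the step in which `u = v_i`. -/
def bcodeB (r : Fin n → Fin n → Prop) (w : Fin n → ℤ) : Fin n → ℤ := (runB r w).2.1

/-- the sorting index of a signed labeled forest. -/
def sorBF (r : Fin n → Fin n → Prop) (w : Fin n → ℤ) : ℤ := (runB r w).2.2

/-! ### Cycles of signed permutations. -/

/-- the extension of `g : Fin n → ℤ` (a signed permutation written in one-line notation,
`g i` = image of `i+1`) to `{±1, …, ±n} ⊆ ℤ`. -/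
def extB (g : Fin n → ℤ) : ℤ → ℤ := fun k =>
  if h : 0 < k ∧ k ≤ (n : ℤ) then g ⟨k.toNat - 1, by omega⟩
  else if h' : -(n : ℤ) ≤ k ∧ k < 0 then -g ⟨(-k).toNat - 1, by omega⟩
  else k

/-- absolute values of the minimal-in-absolute-value elements of balanced cycles. -/
def CycBperm (g : Fin n → ℤ) : Finset ℕ :=
  (Finset.Icc 1 n).filter fun m =>
    (∀ j, j ≤ 2 * n → (extB g)^[j] (m : ℤ) ≠ -(m : ℤ)) ∧
    ∀ j, j ≤ 2 * n → (m : ℤ) ≤ |(extB g)^[j] (m : ℤ)|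

/-- the signed permutation `w ∘ w'⁻¹`, where `w'` is the sorted (natural) labeling. -/
def gOf (r : Fin n → Fin n → Prop) (w : Fin n → ℤ) : Fin n → ℤ := fun i =>
  w (((univ.filter fun v => sortedB r w v = (i : ℤ) + 1).max).getD i)

/-- type B minimal cycle vertices of a signed labeled forest. -/
def CycBF (r : Fin n → Fin n → Prop) (w : Fin n → ℤ) : Finset (Fin n) :=
  univ.filter fun v => (sortedB r w v).toNat ∈ CycBperm (gOf r w)

/-! ### Signed permutations as words. -/

/-- the inverse of the signed permutation `g`. -/
def ginv (g : Fin n → ℤ) (i : Fin n) : ℤ :=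
  let j := ((univ.filter fun x => |g x| = (i : ℤ) + 1).max).getD i
  if 0 < g j then (j : ℤ) + 1 else -((j : ℤ) + 1)

def invP (σ : Equiv.Perm (Fin n)) : ℕ :=
  (univ.filter fun ij : Fin n × Fin n => ij.1 < ij.2 ∧ σ ij.2 < σ ij.1).card

def invL (g : Fin n → ℤ) : ℕ :=
  (univ.filter fun ij : Fin n × Fin n => ij.1 < ij.2 ∧ g ij.2 < g ij.1).card

def n2L (g : Fin n → ℤ) : ℕ :=
  (univ.filter fun ij : Fin n × Fin n => ij.1 < ij.2 ∧ g ij.1 + g ij.2 < 0).card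

/-- one step of Straight Selection Sort for signed permutations (placing value `i+1`). -/
def sorStepP (i : Fin n) (s : (Fin n → ℤ) × ℤ) : (Fin n → ℤ) × ℤ :=
  let g := s.1
  let j := ((univ.filter fun x => |g x| = (i : ℤ) + 1).max).getD i
  let amt : ℤ := if 0 < g j then ((i : ℤ) + 1) - ((j : ℤ) + 1)
                 else ((i : ℤ) + 1) + ((j : ℤ) + 1) - 1
  let g' := if 0 < g j then Function.update (Function.update g j (g i)) i (g j)
            else Function.update (Function.update g j (-(g i))) i (-(g j))
  (g', s.2 + amt)

/-- the sorting index of a signed permutation. -/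
def sorBperm (g : Fin n → ℤ) : ℤ :=
  (((List.finRange n).reverse).foldl (fun s i => sorStepP i s) (g, 0)).2

end

/-! Induction on the number of vertices, removing the last vertex `ρ`, which is a root because
the indexing is natural. A labeling is the label `k` of `ρ` together with the standardized
labeling `σ` of the other vertices; its inversions are those of `σ` plus the descendants of `ρ`
labelled above `k`. No descendant of `ρ` is comparable with a non-descendant, so relabelling
monotonically inside the label set `σ(D)` of the descendants `D` and inside its complement
preserves inversions, and the inversion enumerator of `σ` is the same on every fibre `σ(D) = A`.
The remaining sum over pairs `(A, k)` is evaluated through `(A, k) ↦ {k} ∪ k.succAbove '' A`.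
With `S(F)` the inversion enumerator and `d = |D|` this gives
`C(m, d) S(F) = C(m + 1, d + 1) [d + 1]_q S(F - ρ)`, a recursion that is solved in `ℤ[X]`, where
`C(m, d)` cancels, and then specialised to `q`. -/

section Relabel

variable {α : Type*} [Fintype α] [LinearOrder α]

def orderIsoSubtypeOfCardEq (p q : α → Prop) [DecidablePred p] [DecidablePred q]
    (h : Fintype.card {x // p x} = Fintype.card {x // q x}) : {x // p x} ≃o {x // q x} :=
  (Fintype.orderIsoFinOfCardEq _ h).symm.trans (Fintype.orderIsoFinOfCardEq _ rfl)

def relabelPerm (A B : Finset α) (h : #A = #B) : Equiv.Perm α :=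
  Equiv.subtypeCongr (orderIsoSubtypeOfCardEq (· ∈ A) (· ∈ B) (by simpa using h)).toEquiv
    (orderIsoSubtypeOfCardEq (· ∉ A) (· ∉ B)
      (by simp [Fintype.card_subtype_compl, h])).toEquiv

variable {A B : Finset α} {h : #A = #B}

lemma relabelPerm_mem_iff {x : α} : relabelPerm A B h x ∈ B ↔ x ∈ A := by
  by_cases hx : x ∈ A
  · simp [relabelPerm, Equiv.subtypeCongr, Equiv.sumCompl, hx]
  · simpa [relabelPerm, Equiv.subtypeCongr, Equiv.sumCompl, hx] using
      (orderIsoSubtypeOfCardEq (· ∉ A) (· ∉ B) _ ⟨x, hx⟩).prop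

lemma relabelPerm_lt_iff {x y : α} (hxy : x ∈ A ↔ y ∈ A) :
    relabelPerm A B h x < relabelPerm A B h y ↔ x < y := by
  by_cases hx : x ∈ A
  · simp [relabelPerm, Equiv.subtypeCongr, Equiv.sumCompl, hx, hxy.1 hx]
  · simp [relabelPerm, Equiv.subtypeCongr, Equiv.sumCompl, hx, hxy.not.1 hx]

lemma image_relabelPerm : A.image (relabelPerm A B h) = B := by
  ext y
  obtain ⟨x, rfl⟩ := (relabelPerm A B h).surjective y
  simp [relabelPerm_mem_iff, (relabelPerm A B h).injective.eq_iff]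

end Relabel

lemma sum_pow_card_filter_lt {α : Type*} [LinearOrder α] {R : Type*} [CommRing R] (q : R)
    (B : Finset α) : ∑ x ∈ B, q ^ #{y ∈ B | x < y} = qInt q #B := by
  induction B using Finset.induction_on_min with
  | empty => simp [qInt]
  | insert a B ha ih =>
    have haB : a ∉ B := fun h => lt_irrefl a (ha a h)
    have hgt : {y ∈ insert a B | a < y} = B := by
      rw [filter_insert, if_neg (lt_irrefl a), filter_true_of_mem ha]
    have hrest : ∀ x ∈ B, {y ∈ insert a B | x < y} = {y ∈ B | x < y} := fun x hx => by
      rw [filter_insert, if_neg (ha x hx).not_gt]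
    rw [sum_insert haB, hgt, sum_congr rfl fun x hx => by rw [hrest x hx], ih,
      card_insert_of_notMem haB, qInt, qInt, sum_range_succ, add_comm]

section Insertion

variable {R : Type*} [CommRing R] (q : R) {m : ℕ}

lemma sum_powersetCard_pow_card_lt_succAbove (d : ℕ) (k : Fin (m + 1)) :
    ∑ A ∈ powersetCard d (univ : Finset (Fin m)), q ^ #{a ∈ A | k < k.succAbove a}
      = ∑ B ∈ powersetCard (d + 1) univ with k ∈ B, q ^ #{b ∈ B | k < b} := by
  have hk : ∀ A : Finset (Fin m), k ∉ A.image k.succAbove := by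
    simp [Fin.succAbove_ne]
  refine sum_nbij' (fun A => insert k (A.image k.succAbove))
    (fun B => univ.filter fun a => k.succAbove a ∈ B) ?_ ?_ ?_ ?_ ?_
  · intro A hA
    simp only [mem_powersetCard, subset_univ, true_and, mem_filter] at hA ⊢
    rw [card_insert_of_notMem (hk A), card_image_of_injective _ Fin.succAbove_right_injective, hA]
    exact ⟨rfl, mem_insert_self k _⟩
  · intro B hB
    simp only [mem_powersetCard, subset_univ, true_and, mem_filter] at hB ⊢
    have : (univ.filter fun a => k.succAbove a ∈ B).image k.succAbove = B.erase k := by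
      ext x
      rcases eq_or_ne x k with rfl | hx
      · simp [Fin.succAbove_ne]
      · obtain ⟨a, rfl⟩ := Fin.exists_succAbove_eq hx
        simp [Fin.succAbove_right_injective.eq_iff, Fin.succAbove_ne]
    rw [← card_image_of_injective _ Fin.succAbove_right_injective, this, card_erase_of_mem hB.2,
      hB.1, Nat.add_sub_cancel]
  · intro A _
    ext a
    simp [Fin.succAbove_right_injective.eq_iff, Fin.succAbove_ne]
  · intro B hB
    simp only [mem_powersetCard, mem_filter] at hB
    ext x
    rcases eq_or_ne x k with rfl | hx
    · simp [hB.2]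
    · obtain ⟨a, rfl⟩ := Fin.exists_succAbove_eq hx
      simp [Fin.succAbove_right_injective.eq_iff, Fin.succAbove_ne]
  · intro A _
    rw [filter_insert, if_neg (lt_irrefl k), filter_image,
      card_image_of_injective _ Fin.succAbove_right_injective]

lemma sum_powersetCard_sum_pow_card_lt_succAbove (d : ℕ) :
    ∑ A ∈ powersetCard d (univ : Finset (Fin m)),
        ∑ k : Fin (m + 1), q ^ #{a ∈ A | k < k.succAbove a}
      = ((m + 1).choose (d + 1) : R) * qInt q (d + 1) := by
  rw [sum_comm]
  simp_rw [sum_powersetCard_pow_card_lt_succAbove]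
  rw [sum_comm' (t' := powersetCard (d + 1) univ) (s' := fun B => B) (by simp [and_comm])]
  rw [sum_congr rfl fun B hB => by rw [sum_pow_card_filter_lt, (mem_powersetCard.1 hB).2]]
  simp

end Insertion

section Fibers

variable {R : Type*} [CommRing R] (q : R) {m : ℕ} {r : Fin m → Fin m → Prop}
  {D : Finset (Fin m)}

lemma invF_mul_of_lt_iff {π σ : Equiv.Perm (Fin m)}
    (h : ∀ u v, strictR r u v → (π (σ v) < π (σ u) ↔ σ v < σ u)) :
    invF r (π * σ) = invF r σ := by
  unfold invF
  congr 1
  exact filter_congr fun uv _ => and_congr_right (h uv.1 uv.2)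

lemma sum_pow_invF_image_eq (hD : ∀ u v, strictR r u v → (u ∈ D ↔ v ∈ D))
    {A : Finset (Fin m)} (hA : #A = #D) :
    ∑ σ ∈ univ.filter fun σ : Equiv.Perm (Fin m) => D.image σ = A, q ^ invF r σ
      = ∑ σ ∈ univ.filter fun σ : Equiv.Perm (Fin m) => D.image σ = D, q ^ invF r σ := by
  set π := relabelPerm A D hA
  have himage (σ : Equiv.Perm (Fin m)) : D.image ⇑(π * σ) = (D.image σ).image π := by
    rw [image_image]; rfl
  refine sum_equiv (Equiv.mulLeft π) (fun σ => ?_) (fun σ hσ => ?_)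
  · simp only [mem_filter, mem_univ, true_and, Equiv.coe_mulLeft, himage]
    rw [← image_relabelPerm (h := hA), (image_injective π.injective).eq_iff]
  · simp only [mem_filter, mem_univ, true_and] at hσ
    have hmem (u : Fin m) : σ u ∈ A ↔ u ∈ D := by rw [← hσ, σ.injective.mem_finset_image]
    have hinv : invF r (π * σ) = invF r σ :=
      invF_mul_of_lt_iff fun u v huv => relabelPerm_lt_iff (by rw [hmem, hmem, hD u v huv])
    rw [Equiv.coe_mulLeft, hinv]

lemma choose_mul_sum_pow_invF_mul (hD : ∀ u v, strictR r u v → (u ∈ D ↔ v ∈ D))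
    (g : Finset (Fin m) → R) :
    (m.choose #D : R) * ∑ σ : Equiv.Perm (Fin m), q ^ invF r σ * g (D.image σ)
      = (∑ σ : Equiv.Perm (Fin m), q ^ invF r σ)
        * ∑ A ∈ powersetCard #D univ, g A := by
  have hmaps : ∀ σ ∈ (univ : Finset (Equiv.Perm (Fin m))),
      D.image σ ∈ powersetCard #D univ :=
    fun σ _ => mem_powersetCard_univ.mpr (card_image_of_injective _ σ.injective)
  set c := ∑ σ ∈ univ.filter fun σ : Equiv.Perm (Fin m) => D.image σ = D, q ^ invF r σ
  have hfiber (A) (hA : A ∈ powersetCard #D univ) :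
      ∑ σ ∈ univ.filter fun σ : Equiv.Perm (Fin m) => D.image σ = A, q ^ invF r σ = c :=
    sum_pow_invF_image_eq q hD (mem_powersetCard_univ.mp hA)
  have hweighted : ∑ σ : Equiv.Perm (Fin m), q ^ invF r σ * g (D.image σ)
      = c * ∑ A ∈ powersetCard #D univ, g A := by
    rw [← sum_fiberwise_of_maps_to hmaps, mul_sum]
    refine sum_congr rfl fun A hA => ?_
    rw [← hfiber A hA, sum_mul]
    exact sum_congr rfl fun σ hσ => by rw [(mem_filter.mp hσ).2]
  have htotal : ∑ σ : Equiv.Perm (Fin m), q ^ invF r σ = m.choose #D * c := by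
    rw [← sum_fiberwise_of_maps_to hmaps, sum_congr rfl hfiber]
    simp
  rw [hweighted, htotal]
  ring

end Fibers

noncomputable section RemoveLast

variable {m : ℕ} {r : Fin (m + 1) → Fin (m + 1) → Prop}

def restrictLast (r : Fin (m + 1) → Fin (m + 1) → Prop) : Fin m → Fin m → Prop :=
  fun u v => r u.castSucc v.castSucc

def descLast (r : Fin (m + 1) → Fin (m + 1) → Prop) : Finset (Fin m) :=
  {u | r u.castSucc (Fin.last m)}

lemma IsForest.eq_last (hF : IsForest r) {x : Fin (m + 1)} (h : r (Fin.last m) x) :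
    x = Fin.last m :=
  Fin.last_le_iff.mp (hF.2.2 _ _ h)

lemma strictR_castSucc_last {u : Fin m} :
    strictR r u.castSucc (Fin.last m) ↔ r u.castSucc (Fin.last m) :=
  and_iff_left (Fin.castSucc_lt_last u).ne

lemma strictR_restrictLast {u v : Fin m} :
    strictR (restrictLast r) u v ↔ strictR r u.castSucc v.castSucc := by
  simp [strictR, restrictLast]

lemma isForest_restrictLast (hF : IsForest r) : IsForest (restrictLast r) := by
  obtain ⟨hpo, hchain, hidx⟩ := hF
  exact ⟨{ refl := fun _ => hpo.refl _
           trans := fun _ _ _ => hpo.trans _ _ _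
           antisymm := fun _ _ h1 h2 => Fin.castSucc_injective m (hpo.antisymm _ _ h1 h2) },
    fun _ _ _ => hchain _ _ _, fun _ _ h => Fin.castSucc_le_castSucc_iff.mp (hidx _ _ h)⟩

lemma IsForest.hook_castSucc (hF : IsForest r) (v : Fin m) :
    hook r v.castSucc = hook (restrictLast r) v := by
  have : ¬ r (Fin.last m) v.castSucc := fun h => (Fin.castSucc_lt_last v).ne (hF.eq_last h)
  simp only [hook, card_filter, Fin.sum_univ_castSucc, this, if_false, add_zero]
  rfl

lemma IsForest.hook_last (hF : IsForest r) : hook r (Fin.last m) = #(descLast r) + 1 := by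
  simp only [hook, descLast, card_filter, Fin.sum_univ_castSucc]
  simp [hF.1.refl]

lemma IsForest.mem_descLast_iff (hF : IsForest r) {u v : Fin m}
    (h : strictR (restrictLast r) u v) : u ∈ descLast r ↔ v ∈ descLast r := by
  simp only [descLast, mem_filter, mem_univ, true_and]
  refine ⟨fun hu => ?_, hF.1.trans _ _ _ h.1⟩
  rcases hF.2.1 _ _ _ h.1 hu with hv | hv
  · exact hv
  · exact absurd (hF.eq_last hv) (Fin.castSucc_lt_last v).ne

def insertLabel (k : Fin (m + 1)) (σ : Equiv.Perm (Fin m)) : Equiv.Perm (Fin (m + 1)) :=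
  ((finSuccEquiv' (Fin.last m)).trans σ.optionCongr).trans (finSuccEquiv' k).symm

@[simp]
lemma insertLabel_last (k : Fin (m + 1)) (σ : Equiv.Perm (Fin m)) :
    insertLabel k σ (Fin.last m) = k := by
  simp [insertLabel]

@[simp]
lemma insertLabel_castSucc (k : Fin (m + 1)) (σ : Equiv.Perm (Fin m)) (u : Fin m) :
    insertLabel k σ u.castSucc = k.succAbove (σ u) := by
  simp [insertLabel, finSuccEquiv'_last_apply_castSucc]

lemma insertLabel_bijective :
    Function.Bijective fun p : Fin (m + 1) × Equiv.Perm (Fin m) => insertLabel p.1 p.2 := by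
  rw [Fintype.bijective_iff_injective_and_card]
  refine ⟨fun ⟨k, σ⟩ ⟨k', σ'⟩ h => ?_,
    by simp [Fintype.card_perm, Nat.factorial_succ]⟩
  have hk : k = k' := by simpa using DFunLike.congr_fun h (Fin.last m)
  subst hk
  have hσ : σ = σ' := Equiv.ext fun u => by simpa using DFunLike.congr_fun h u.castSucc
  rw [hσ]

lemma invF_insertLabel (hF : IsForest r) (k : Fin (m + 1)) (σ : Equiv.Perm (Fin m)) :
    invF r (insertLabel k σ)
      = invF (restrictLast r) σ + #{u ∈ descLast r | k < k.succAbove (σ u)} := by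
  have hlast : ∀ x, ¬ strictR r (Fin.last m) x := fun x h => h.2 (hF.eq_last h.1).symm
  simp only [invF, card_filter, Fintype.sum_prod_type, Fin.sum_univ_castSucc, hlast, false_and,
    if_false, sum_const_zero, add_zero, insertLabel_castSucc, insertLabel_last,
    Fin.succAbove_lt_succAbove_iff]
  rw [sum_add_distrib, descLast, sum_filter]
  congr 1
  · simp only [strictR_restrictLast]
  · simp only [strictR_castSucc_last, ite_and]

variable {R : Type*} [CommRing R] (q : R)

lemma choose_mul_sum_pow_invF_succ (hF : IsForest r) :
    (m.choose #(descLast r) : R) * ∑ w : Equiv.Perm (Fin (m + 1)), q ^ invF r w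
      = ((m + 1).choose (#(descLast r) + 1) : R) * qInt q (#(descLast r) + 1)
        * ∑ σ : Equiv.Perm (Fin m), q ^ invF (restrictLast r) σ := by
  have hsplit : ∑ w : Equiv.Perm (Fin (m + 1)), q ^ invF r w
      = ∑ σ : Equiv.Perm (Fin m), q ^ invF (restrictLast r) σ
          * ∑ k : Fin (m + 1), q ^ #{a ∈ (descLast r).image σ | k < k.succAbove a} := by
    rw [← Fintype.sum_bijective _ insertLabel_bijective _ _ fun _ => rfl, Fintype.sum_prod_type,
      sum_comm]
    refine sum_congr rfl fun σ _ => ?_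
    rw [mul_sum]
    refine sum_congr rfl fun k _ => ?_
    rw [invF_insertLabel hF, pow_add, filter_image, card_image_of_injective _ σ.injective]
  rw [hsplit, choose_mul_sum_pow_invF_mul q (fun u v => hF.mem_descLast_iff)
    (fun A => ∑ k : Fin (m + 1), q ^ #{a ∈ A | k < k.succAbove a}),
    sum_powersetCard_sum_pow_card_lt_succAbove]
  ring

end RemoveLast

lemma IsForest.hook_pos {n : ℕ} {r : Fin n → Fin n → Prop} (hF : IsForest r) (v : Fin n) :
    0 < hook r v :=
  card_pos.mpr ⟨v, mem_filter.mpr ⟨mem_univ v, hF.1.refl v⟩⟩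

theorem prod_hook_mul_sum_pow_invF {R : Type*} [CommRing R] [IsDomain R] [CharZero R] (q : R)
    {n : ℕ} {r : Fin n → Fin n → Prop} (hF : IsForest r) :
    ((∏ v, hook r v : ℕ) : R) * ∑ w : Equiv.Perm (Fin n), q ^ invF r w
      = n.factorial * ∏ v, qInt q (hook r v) := by
  induction n with
  | zero => simp [invF]
  | succ m ih =>
    set d := #(descLast r)
    have hstep := choose_mul_sum_pow_invF_succ q hF
    have hrec := ih (isForest_restrictLast hF)
    have hchoose : ((m + 1).choose (d + 1) * (d + 1) : R) = (m + 1) * m.choose d := by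
      exact_mod_cast (Nat.add_one_mul_choose_eq m d).symm
    have hne : (m.choose d : R) ≠ 0 := Nat.cast_ne_zero.mpr (Nat.choose_pos (by
      simpa using card_le_univ (descLast r))).ne'
    refine mul_left_cancel₀ hne ?_
    rw [Fin.prod_univ_castSucc, Fin.prod_univ_castSucc, hF.hook_last, Nat.factorial_succ]
    simp only [hF.hook_castSucc]
    push_cast at hrec ⊢
    linear_combination (↑d + 1) * (∏ v, (hook (restrictLast r) v : R)) * hstep
      + ((m + 1).choose (d + 1) * qInt q (d + 1) * (d + 1) : R) * hrec
      + (m.factorial * qInt q (d + 1) * ∏ v, qInt q (hook (restrictLast r) v) : R) * hchoose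

lemma qInt_zero {R : Type*} [CommRing R] {m : ℕ} (hm : 0 < m) : qInt (0 : R) m = 1 := by
  obtain ⟨k, rfl⟩ := Nat.exists_eq_add_one_of_ne_zero hm.ne'
  simp [qInt, sum_range_succ']

lemma prod_hook_dvd_factorial {n : ℕ} {r : Fin n → Fin n → Prop} (hF : IsForest r) :
    ∏ v, hook r v ∣ n.factorial := by
  have h := prod_hook_mul_sum_pow_invF (0 : ℤ) hF
  simp only [qInt_zero (hF.hook_pos _), prod_const_one, mul_one] at h
  exact Int.natCast_dvd_natCast.mp (Dvd.intro _ h)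

open Polynomial

/-- The inversion enumerator over all labelings of a forest. -/
theorem stmt1 (n : ℕ) (r : Fin n → Fin n → Prop) (hF : IsForest r)
    (R : Type*) [CommRing R] (q : R) :
    ∑ w : Equiv.Perm (Fin n), q ^ invF r w
      = ((n.factorial / ∏ v : Fin n, hook r v : ℕ) : R) * ∏ v : Fin n, qInt q (hook r v) := by
  have hpoly : ∑ w : Equiv.Perm (Fin n), (X : ℤ[X]) ^ invF r w
      = ((n.factorial / ∏ v, hook r v : ℕ) : ℤ[X]) * ∏ v, qInt X (hook r v) := by
    refine mul_left_cancel₀ (Nat.cast_ne_zero.mpr (prod_pos fun v _ => hF.hook_pos v).ne' :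
      ((∏ v, hook r v : ℕ) : ℤ[X]) ≠ 0) ?_
    rw [prod_hook_mul_sum_pow_invF X hF, ← mul_assoc, ← Nat.cast_mul,
      Nat.mul_div_cancel' (prod_hook_dvd_factorial hF)]
  simpa [qInt] using congrArg (aeval q) hpoly
end

section
/- Let w be a signed labeling of a forest F with A-code (a_1,...,a_n). Then w(v_i) < 0 if and only if h_{v_i} ≤ a_i ≤ 2h_{v_i} − 1; moreover, if w(v_i) > 0 then a_i < h_{v_i}. -/
open Finset

open scoped Classical

/-!
Split the vertices strictly below `v_i` according to `w(v_i) < w(u)` and `w(u) + w(v_i) < 0`.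
For `w(v_i) ≥ 0` the two conditions exclude each other, so `a_i` is at most their number `h_{v_i} - 1`.
For `w(v_i) < 0` every such `u` satisfies one of them (as `w(u) ≠ w(v_i)`), so `a_i ≥ (h_{v_i} - 1) + 1`,
while `a_i ≤ 2(h_{v_i} - 1) + 1` always.
-/

section CardFilter

variable {α : Type*} (s : Finset α) (f : α → ℤ) {x : ℤ}

theorem card_filter_lt_add_card_filter_add_neg_le (hx : 0 ≤ x) :
    #(s.filter (x < f ·)) + #(s.filter (f · + x < 0)) ≤ #s := by
  have hdisj : Disjoint (s.filter (x < f ·)) (s.filter (f · + x < 0)) :=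
    disjoint_filter.2 fun _ _ h₁ h₂ => by linarith
  rw [← card_union_of_disjoint hdisj]
  exact card_le_card (union_subset (filter_subset _ _) (filter_subset _ _))

theorem card_le_card_filter_lt_add_card_filter_add_neg (hx : x < 0) (hf : ∀ u ∈ s, f u ≠ x) :
    #s ≤ #(s.filter (x < f ·)) + #(s.filter (f · + x < 0)) := by
  have hcover : s ⊆ s.filter (x < f ·) ∪ s.filter (f · + x < 0) := by
    intro u hu
    rcases (hf u hu).lt_or_gt with hlt | hgt
    · exact mem_union_right _ (mem_filter.2 ⟨hu, by linarith⟩)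
    · exact mem_union_left _ (mem_filter.2 ⟨hu, hgt⟩)
  exact (card_le_card hcover).trans (card_union_le _ _)

end CardFilter

section ACode

variable {n : ℕ} {r : Fin n → Fin n → Prop} {w : Fin n → ℤ} {i : Fin n}

noncomputable def strictBelow (r : Fin n → Fin n → Prop) (i : Fin n) : Finset (Fin n) :=
  univ.filter (strictR r · i)

@[simp]
theorem mem_strictBelow {u : Fin n} : u ∈ strictBelow r i ↔ r u i ∧ u ≠ i := by
  rw [strictBelow, mem_filter]
  exact and_iff_right (mem_univ u)

theorem hook_eq_card_strictBelow_add_one (hr : r i i) : hook r i = #(strictBelow r i) + 1 := by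
  have : univ.filter (r · i) = insert i (strictBelow r i) := by
    ext u
    by_cases hu : u = i <;> simp [hu, hr]
  rw [hook, this, card_insert_of_notMem (by simp)]

theorem acodeF_eq (r : Fin n → Fin n → Prop) (w : Fin n → ℤ) (i : Fin n) :
    acodeF r w i = #((strictBelow r i).filter (w i < w ·)) +
      #((strictBelow r i).filter (w · + w i < 0)) + if w i < 0 then 1 else 0 := by
  simp only [acodeF, strictBelow, filter_filter]

theorem acodeF_lt_hook_of_nonneg (hr : r i i) (hw : 0 ≤ w i) : acodeF r w i < hook r i := by
  have := card_filter_lt_add_card_filter_add_neg_le (strictBelow r i) w hw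
  rw [acodeF_eq, if_neg hw.not_gt, hook_eq_card_strictBelow_add_one hr]
  omega

theorem hook_le_acodeF_of_neg (hr : r i i) (hw : w i < 0) (hne : ∀ u ≠ i, w u ≠ w i) :
    hook r i ≤ acodeF r w i := by
  have := card_le_card_filter_lt_add_card_filter_add_neg (strictBelow r i) w hw
    fun u hu => hne u (mem_strictBelow.1 hu).2
  rw [acodeF_eq, if_pos hw, hook_eq_card_strictBelow_add_one hr]
  omega

theorem acodeF_le_two_mul_hook_sub_one (hr : r i i) : acodeF r w i ≤ 2 * hook r i - 1 := by
  have h₁ := card_filter_le (strictBelow r i) (w i < w ·)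
  have h₂ := card_filter_le (strictBelow r i) (w · + w i < 0)
  rw [acodeF_eq, hook_eq_card_strictBelow_add_one hr]
  split <;> omega

end ACode

theorem abs_wVal {n : ℕ} (p : Equiv.Perm (Fin n) × (Fin n → Bool)) (v : Fin n) :
    |wVal p v| = (p.1 v : ℤ) + 1 := by
  unfold wVal
  split <;> simp only [neg_one_mul, one_mul, abs_neg] <;> exact abs_of_pos (by positivity)

theorem wVal_injective {n : ℕ} (p : Equiv.Perm (Fin n) × (Fin n → Bool)) :
    Function.Injective (wVal p) := fun u v h => by
  have := abs_wVal p u ▸ abs_wVal p v ▸ congrArg abs h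
  exact p.1.injective (Fin.ext (by omega))

/-- `w(v_i) < 0` iff `h_{v_i} ≤ a_i ≤ 2h_{v_i} - 1`; and `w(v_i) > 0` implies `a_i < h_{v_i}`. -/
theorem stmt4 (n : ℕ) (r : Fin n → Fin n → Prop) (hF : IsForest r)
    (p : Equiv.Perm (Fin n) × (Fin n → Bool)) (i : Fin n) :
    (wVal p i < 0 ↔ hook r i ≤ acodeF r (wVal p) i ∧ acodeF r (wVal p) i ≤ 2 * hook r i - 1) ∧
      (0 < wVal p i → acodeF r (wVal p) i < hook r i) := by
  have hr : r i i := hF.1.1.refl i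
  refine ⟨⟨fun hneg => ⟨?_, acodeF_le_two_mul_hook_sub_one hr⟩, fun h => ?_⟩,
    fun hpos => acodeF_lt_hook_of_nonneg hr hpos.le⟩
  · exact hook_le_acodeF_of_neg hr hneg fun u hu => (wVal_injective p).ne hu
  · by_contra hnonneg
    exact (acodeF_lt_hook_of_nonneg hr (not_lt.1 hnonneg)).not_ge h.1
end

section
/- Given a forest F of size n and any sequence (a_1,...,a_n) with 0 ≤ a_i ≤ 2h_{v_i} − 1, exactly n!/∏_{v∈V(F)} h_v signed labelings of F have A-code equal to (a_1,...,a_n). -/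
open Finset

open scoped Classical

/-!
Model a signed labeling as `w : Fin n → ℤ` with nonzero labels of distinct absolute values, and
let `B_i = {±w u : u ≤_F v_i}`, a set of `2 h_i` integers closed under negation. The A-code entry
`a_i` is the number of elements of `B_i` above `w v_i`.

Let `y` be the cyclic predecessor of `w v_i` in `B_i` and `p ≤_F v_i` the vertex with
`|w p| = |y|`; relabel `v_i` by `y` and `p` by `±w v_i`, keeping the sign of `w p`. This raises
`a_i` by one modulo `2 h_i` and leaves every other `a_j` unchanged: either `y = -w v_i` and only a
sign changes, or `y` and `w v_i` have the same sign and are adjacent in `B_i`, so that no other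
label of the subtree of `v_i` compares differently with them (nor with their negatives). Applying
the step to `-w'` returns `-w`, so it is injective. Thus every code coordinate can be shifted
cyclically by a bijection of the `2^n n!` signed labelings, and all `2^n ∏ h_v` codes have the
same number of preimages.
-/

section CyclicPred

variable {α : Type*} [LinearOrder α]

def cyclicPred (s : Finset α) (x : α) : α :=
  if h : (s.filter (· < x)).Nonempty then (s.filter (· < x)).max' h
  else if hs : s.Nonempty then s.max' hs else x

variable {s : Finset α} {x : α}

theorem cyclicPred_spec (hx : x ∈ s) :
    cyclicPred s x ∈ s ∧
      ((cyclicPred s x < x ∧ ∀ b ∈ s, b < x → b ≤ cyclicPred s x) ∨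
        ∀ b ∈ s, x ≤ b ∧ b ≤ cyclicPred s x) := by
  unfold cyclicPred
  split_ifs with h hs
  · obtain ⟨hmem, hlt⟩ := mem_filter.1 ((s.filter (· < x)).max'_mem h)
    exact ⟨hmem, Or.inl ⟨hlt, fun b hb hbx => le_max' _ b (mem_filter.2 ⟨hb, hbx⟩)⟩⟩
  · exact ⟨max'_mem s hs, Or.inr fun b hb =>
      ⟨not_lt.1 fun hbx => h ⟨b, mem_filter.2 ⟨hb, hbx⟩⟩, le_max' s b hb⟩⟩
  · exact absurd ⟨x, hx⟩ hs

theorem cyclicPred_eq_of_spec {y : α} (hx : x ∈ s) (hy : y ∈ s)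
    (h : (y < x ∧ ∀ b ∈ s, b < x → b ≤ y) ∨ ∀ b ∈ s, x ≤ b ∧ b ≤ y) :
    cyclicPred s x = y := by
  obtain ⟨hmem, hspec⟩ := cyclicPred_spec hx
  rcases h with ⟨hlt, hle⟩ | hle <;> rcases hspec with ⟨hlt', hle'⟩ | hle'
  · exact le_antisymm (hle _ hmem hlt') (hle' _ hy hlt)
  · exact absurd hlt (not_lt.2 (hle' y hy).1)
  · exact absurd hlt' (not_lt.2 (hle _ hmem).1)
  · exact le_antisymm (hle _ hmem).2 (hle' _ hy).2

theorem card_filter_cyclicPred_lt (hx : x ∈ s) :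
    #(s.filter (cyclicPred s x < ·)) = (#(s.filter (x < ·)) + 1) % #s := by
  obtain ⟨hmem, ⟨hlt, hle⟩ | hle⟩ := cyclicPred_spec hx
  · have hins : s.filter (cyclicPred s x < ·) = insert x (s.filter (x < ·)) := by
      ext b
      simp only [mem_filter, mem_insert]
      constructor
      · rintro ⟨hb, hyb⟩
        rcases lt_trichotomy b x with hbx | rfl | hxb
        · exact absurd (hle b hb hbx) (not_le.2 hyb)
        · exact Or.inl rfl
        · exact Or.inr ⟨hb, hxb⟩
      · rintro (rfl | ⟨hb, hxb⟩)
        · exact ⟨hx, hlt⟩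
        · exact ⟨hb, hlt.trans hxb⟩
    have hsub : s.filter (cyclicPred s x < ·) ⊆ s.erase (cyclicPred s x) := fun b hb =>
      mem_erase.2 ⟨(mem_filter.1 hb).2.ne', (mem_filter.1 hb).1⟩
    have hcard := card_le_card hsub
    rw [card_erase_of_mem hmem, hins, card_insert_of_notMem (by simp)] at hcard
    rw [hins, card_insert_of_notMem (by simp), Nat.mod_eq_of_lt (by omega)]
  · have hempty : s.filter (cyclicPred s x < ·) = ∅ :=
      filter_eq_empty_iff.2 fun b hb => not_lt.2 (hle b hb).2
    have herase : s.filter (x < ·) = s.erase x := by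
      ext b
      simp only [mem_filter, mem_erase]
      exact ⟨fun ⟨hb, h⟩ => ⟨h.ne', hb⟩,
        fun ⟨hne, hb⟩ => ⟨hb, lt_of_le_of_ne (hle b hb).1 hne.symm⟩⟩
    rw [hempty, herase, card_erase_of_mem hx, Nat.sub_add_cancel (card_pos.2 ⟨x, hx⟩),
      Nat.mod_self, card_empty]

end CyclicPred

def countAbove (t v : ℤ) : ℕ := (if t < v then 1 else 0) + if t < -v then 1 else 0

theorem countAbove_congr (t : ℤ) {v v' : ℤ} (h : v.natAbs = v'.natAbs) :
    countAbove t v = countAbove t v' := by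
  unfold countAbove
  split_ifs <;> omega

section SymmetricSet

variable {s : Finset ℤ} {x : ℤ}

theorem cyclicPred_neg_cyclicPred (hs : ∀ b ∈ s, -b ∈ s) (hx : x ∈ s) :
    cyclicPred s (-cyclicPred s x) = -x := by
  obtain ⟨hy, ⟨hlt, hle⟩ | hle⟩ := cyclicPred_spec hx
  · refine cyclicPred_eq_of_spec (hs _ hy) (hs x hx) (Or.inl ⟨by omega, fun b hb hby => ?_⟩)
    by_contra hbx
    have := hle (-b) (hs b hb) (by omega)
    omega
  · exact cyclicPred_eq_of_spec (hs _ hy) (hs x hx)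
      (Or.inr fun b hb => by have := hle (-b) (hs b hb); omega)

theorem cyclicPred_of_ne_neg (hs : ∀ b ∈ s, -b ∈ s) (h0 : (0 : ℤ) ∉ s) (hx : x ∈ s)
    (hne : cyclicPred s x ≠ -x) :
    cyclicPred s x < x ∧ (0 < x ↔ 0 < cyclicPred s x) ∧
      ∀ b ∈ s, ¬(cyclicPred s x < b ∧ b < x) := by
  obtain ⟨hy, ⟨hlt, hle⟩ | hle⟩ := cyclicPred_spec hx
  · have hgap : ∀ b ∈ s, ¬(cyclicPred s x < b ∧ b < x) := fun b hb ⟨h1, h2⟩ =>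
      absurd (hle b hb h2) (not_le.2 h1)
    refine ⟨hlt, ⟨fun hx0 => ?_, fun hy0 => hy0.trans hlt⟩, hgap⟩
    have hy0 : cyclicPred s x ≠ 0 := fun h => h0 (h ▸ hy)
    have := hle (-x) (hs x hx) (by omega)
    by_contra hneg
    exact hgap _ (hs _ hy) ⟨by omega, by omega⟩
  · exact absurd (le_antisymm (by have := hle _ (hs _ hy); omega) (hle _ (hs x hx)).2) hne

theorem countAbove_cyclicPred (hs : ∀ b ∈ s, -b ∈ s) (h0 : (0 : ℤ) ∉ s) (hx : x ∈ s)
    (hne : cyclicPred s x ≠ -x) {v : ℤ} (hv : v ∈ s)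
    (hvx : v.natAbs ≠ x.natAbs) (hvy : v.natAbs ≠ (cyclicPred s x).natAbs) :
    countAbove x v = countAbove (cyclicPred s x) v ∧
      countAbove (-x) v = countAbove (-cyclicPred s x) v ∧
      countAbove v x = countAbove v (cyclicPred s x) := by
  obtain ⟨hlt, -, hgap⟩ := cyclicPred_of_ne_neg hs h0 hx hne
  have h1 := hgap v hv
  have h2 := hgap (-v) (hs v hv)
  unfold countAbove
  refine ⟨?_, ?_, ?_⟩ <;> split_ifs <;> omega

end SymmetricSet

theorem Equiv.swap_apply_iff {α : Type*} [DecidableEq α] {P : α → Prop} {a b : α}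
    (h : P a ↔ P b) (u : α) : P (Equiv.swap a b u) ↔ P u := by
  rw [Equiv.swap_apply_def]
  split_ifs with ha hb
  · rw [ha]; exact h.symm
  · rw [hb]; exact h
  · rfl

section PmValues

variable {ι : Type*}

def SignedInjective (w : ι → ℤ) : Prop :=
  (∀ u, w u ≠ 0) ∧ Function.Injective fun u => (w u).natAbs

def pmValues (w : ι → ℤ) (s : Finset ι) : Finset ℤ := s.biUnion fun u => {w u, -w u}

variable {w w' : ι → ℤ} {s : Finset ι}

theorem mem_pmValues {b : ℤ} : b ∈ pmValues w s ↔ ∃ u ∈ s, (w u).natAbs = b.natAbs := by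
  simp only [pmValues, mem_biUnion, mem_insert, mem_singleton]
  constructor <;> rintro ⟨u, hu, h⟩ <;> exact ⟨u, hu, by omega⟩

theorem neg_mem_pmValues {b : ℤ} (hb : b ∈ pmValues w s) : -b ∈ pmValues w s := by
  rw [mem_pmValues, Int.natAbs_neg]
  exact mem_pmValues.1 hb

theorem zero_notMem_pmValues (hw : ∀ u, w u ≠ 0) : (0 : ℤ) ∉ pmValues w s := by
  rw [mem_pmValues]
  rintro ⟨u, -, hu⟩
  exact hw u (by omega)

theorem pmValues_congr (h : ∀ u ∈ s, (w' u).natAbs = (w u).natAbs) :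
    pmValues w' s = pmValues w s := by
  ext b
  simp only [mem_pmValues]
  constructor <;> rintro ⟨u, hu, hb⟩ <;> exact ⟨u, hu, by rw [← hb, h u hu]⟩

theorem pmValues_comp_perm (σ : Equiv.Perm ι) (hσ : ∀ u, σ u ∈ s ↔ u ∈ s) :
    pmValues (fun u => w (σ u)) s = pmValues w s := by
  ext b
  simp only [mem_pmValues]
  constructor
  · rintro ⟨u, hu, hb⟩
    exact ⟨σ u, (hσ u).2 hu, hb⟩
  · rintro ⟨u, hu, hb⟩
    exact ⟨σ.symm u, (hσ _).1 (by rwa [Equiv.apply_symm_apply]),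
      by rwa [Equiv.apply_symm_apply]⟩

theorem signedInjective_neg (hw : SignedInjective w) : SignedInjective (-w) :=
  ⟨fun u => neg_ne_zero.2 (hw.1 u), fun u v h => hw.2 (by simpa using h)⟩

theorem pairwiseDisjoint_pmPairs (hw : SignedInjective w) (s : Finset ι) :
    (s : Set ι).PairwiseDisjoint fun u => ({w u, -w u} : Finset ℤ) := by
  intro u _ v _ huv
  refine Finset.disjoint_left.2 fun b hbu hbv => huv (hw.2 ?_)
  simp only [mem_insert, mem_singleton] at hbu hbv
  simp only
  omega

theorem card_pmValues (hw : SignedInjective w) (s : Finset ι) : #(pmValues w s) = 2 * #s := by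
  rw [pmValues, card_biUnion (pairwiseDisjoint_pmPairs hw s), mul_comm, ← smul_eq_mul,
    ← sum_const]
  refine sum_congr rfl fun u _ => card_pair fun h => hw.1 u (by omega)

theorem card_filter_lt_pmValues (hw : SignedInjective w) (s : Finset ι) (t : ℤ) :
    #((pmValues w s).filter (t < ·)) = ∑ u ∈ s, countAbove t (w u) := by
  rw [pmValues, filter_biUnion,
    card_biUnion ((pairwiseDisjoint_pmPairs hw s).mono fun _ => filter_subset _ _)]
  refine sum_congr rfl fun u _ => ?_
  have hne : w u ≠ -w u := fun h => hw.1 u (by omega)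
  rw [filter_insert, filter_singleton, countAbove]
  split_ifs <;> simp_all

end PmValues

section EquidistributedCode

variable {α ι : Type*} [Fintype α] [Fintype ι] [DecidableEq ι]
  {code : α → ι → ℕ} {m : ι → ℕ} {ρ : ι → α → α}

/-- `ρ i` is a bijection of the finite type `α`, and the shift is injective on codes. -/
theorem card_fiber_shift (hcode : ∀ p i, code p i < m i) (hρ : ∀ i, (ρ i).Injective)
    (hρcode : ∀ i p, code (ρ i p) = Function.update (code p) i ((code p i + 1) % m i))
    {a : ι → ℕ} (ha : ∀ i, a i < m i) (i : ι) :
    #{p | code p = Function.update a i ((a i + 1) % m i)} = #{p | code p = a} := by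
  have hsurj := Finite.injective_iff_surjective.1 (hρ i)
  suffices himage : ({p | code p = Function.update a i ((a i + 1) % m i)} : Finset α)
      = ({p | code p = a} : Finset α).image (ρ i) by
    rw [himage, card_image_of_injective _ (hρ i)]
  ext q
  simp only [mem_filter, mem_univ, true_and, mem_image]
  constructor
  · intro hq
    obtain ⟨p, rfl⟩ := hsurj q
    refine ⟨p, funext fun j => ?_, rfl⟩
    have hj := congrFun ((hρcode i p).symm.trans hq) j
    rcases eq_or_ne j i with rfl | hji
    · simp only [Function.update_self] at hj
      exact (Nat.ModEq.add_right_cancel' 1 hj).eq_of_lt_of_lt (hcode p j) (ha j)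
    · simpa [hji] using hj
  · rintro ⟨p, rfl, rfl⟩
    exact hρcode i p

theorem card_fiber_update (hcode : ∀ p i, code p i < m i) (hρ : ∀ i, (ρ i).Injective)
    (hρcode : ∀ i p, code (ρ i p) = Function.update (code p) i ((code p i + 1) % m i))
    {a : ι → ℕ} (ha : ∀ i, a i < m i) (i : ι) {v : ℕ} (hv : v < m i) :
    #{p | code p = Function.update a i v} = #{p | code p = a} := by
  have hconst : ∀ v < m i,
      #{p | code p = Function.update a i v} = #{p | code p = Function.update a i 0} := by
    intro v
    induction v with
    | zero => exact fun _ => rfl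
    | succ v ih =>
      intro hv
      have hbox : ∀ j, Function.update a i v j < m j := by
        intro j
        rcases eq_or_ne j i with rfl | hji
        · simp only [Function.update_self]; omega
        · simpa [hji] using ha j
      rw [← ih (by omega), ← card_fiber_shift hcode hρ hρcode hbox i, Function.update_idem,
        Function.update_self, Nat.mod_eq_of_lt hv]
  rw [hconst v hv, ← hconst (a i) (ha i), Function.update_eq_self]

theorem card_fiber_eq (hcode : ∀ p i, code p i < m i) (hρ : ∀ i, (ρ i).Injective)
    (hρcode : ∀ i p, code (ρ i p) = Function.update (code p) i ((code p i + 1) % m i))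
    {a b : ι → ℕ} (ha : ∀ i, a i < m i) (hb : ∀ i, b i < m i) :
    #{p | code p = b} = #{p | code p = a} := by
  have hmix : ∀ s : Finset ι,
      #{p | code p = fun j => if j ∈ s then b j else a j} = #{p | code p = a} := by
    intro s
    induction s using Finset.induction_on with
    | empty => simp
    | insert i s hi ih =>
      have hbox : ∀ j, (if j ∈ s then b j else a j) < m j := fun j => by split_ifs <;> simp [*]
      have hupd : (fun j => if j ∈ insert i s then b j else a j)
          = Function.update (fun j => if j ∈ s then b j else a j) i (b i) := by
        funext j
        rcases eq_or_ne j i with rfl | hji <;> simp [*]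
      rw [hupd, card_fiber_update hcode hρ hρcode hbox i (hb i), ih]
  simpa using hmix univ

theorem card_fiber_mul_prod_eq_card (hcode : ∀ p i, code p i < m i)
    (hρ : ∀ i, (ρ i).Injective)
    (hρcode : ∀ i p, code (ρ i p) = Function.update (code p) i ((code p i + 1) % m i))
    {a : ι → ℕ} (ha : ∀ i, a i < m i) :
    #{p | code p = a} * ∏ i, m i = Fintype.card α := by
  have hfib := card_eq_sum_card_fiberwise (s := univ) (t := Fintype.piFinset fun i => range (m i))
    (f := code) fun p _ => Fintype.mem_piFinset.2 fun i => mem_range.2 (hcode p i)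
  rw [card_univ, sum_congr rfl fun b hb => card_fiber_eq hcode hρ hρcode ha
    fun i => mem_range.1 (Fintype.mem_piFinset.1 hb i)] at hfib
  rw [hfib, sum_const, Fintype.card_piFinset, smul_eq_mul, mul_comm]
  simp only [card_range]

end EquidistributedCode

noncomputable section

namespace SignedLabeling

variable {n : ℕ}

def below (r : Fin n → Fin n → Prop) (i : Fin n) : Finset (Fin n) := univ.filter (r · i)

def strictBelow (r : Fin n → Fin n → Prop) (j : Fin n) : Finset (Fin n) :=
  univ.filter (strictR r · j)

def subtreeValues (r : Fin n → Fin n → Prop) (w : Fin n → ℤ) (i : Fin n) : Finset ℤ :=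
  pmValues w (below r i)

def nextVal (r : Fin n → Fin n → Prop) (w : Fin n → ℤ) (i : Fin n) : ℤ :=
  cyclicPred (subtreeValues r w i) (w i)

def pivot (r : Fin n → Fin n → Prop) (w : Fin n → ℤ) (i : Fin n) : Fin n :=
  if h : ∃ u, (w u).natAbs = (nextVal r w i).natAbs then h.choose else i

/-- If `pivot r w i = i`, i.e. `nextVal r w i = -w i`, this only flips the sign of `w i`. -/
def cyclicStep (r : Fin n → Fin n → Prop) (w : Fin n → ℤ) (i : Fin n) : Fin n → ℤ :=
  Function.update
    (Function.update w (pivot r w i) (if w (pivot r w i) = nextVal r w i then w i else -w i))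
    i (nextVal r w i)

variable {r : Fin n → Fin n → Prop} {w : Fin n → ℤ} {i j : Fin n}

theorem mem_below {u : Fin n} : u ∈ below r i ↔ r u i := by simp [below]

theorem mem_strictBelow {u : Fin n} : u ∈ strictBelow r j ↔ strictR r u j := by
  simp [strictBelow]

theorem below_eq_insert_strictBelow (hi : r i i) : below r i = insert i (strictBelow r i) := by
  ext u
  rw [mem_below, mem_insert, mem_strictBelow, strictR]
  constructor
  · intro hu
    by_cases hui : u = i
    · exact Or.inl hui
    · exact Or.inr ⟨hu, hui⟩
  · rintro (rfl | ⟨hu, -⟩)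
    · exact hi
    · exact hu

theorem acodeF_eq_sum (w : Fin n → ℤ) (j : Fin n) :
    acodeF r w j =
      (∑ u ∈ strictBelow r j, countAbove (w j) (w u)) + if w j < 0 then 1 else 0 := by
  have habove : (univ.filter fun u => strictR r u j ∧ w j < w u)
      = (strictBelow r j).filter fun u => w j < w u := by
    simp only [strictBelow, filter_filter]
  have hneg : (univ.filter fun u => strictR r u j ∧ w u + w j < 0)
      = (strictBelow r j).filter fun u => w j < -w u := by
    simp only [strictBelow, filter_filter]
    exact filter_congr fun u _ => and_congr_right fun _ => by omega
  rw [acodeF, habove, hneg, card_filter, card_filter, ← sum_add_distrib]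
  rfl

theorem acodeF_eq_card_filter (hw : SignedInjective w) (hi : r i i) :
    acodeF r w i = #((subtreeValues r w i).filter (w i < ·)) := by
  have hself : countAbove (w i) (w i) = if w i < 0 then 1 else 0 := by
    unfold countAbove
    split_ifs <;> omega
  rw [acodeF_eq_sum, subtreeValues, card_filter_lt_pmValues hw, below_eq_insert_strictBelow hi,
    sum_insert fun h => (mem_strictBelow.1 h).2 rfl, hself, add_comm]

theorem mem_subtreeValues_self (hi : r i i) : w i ∈ subtreeValues r w i :=
  mem_pmValues.2 ⟨i, mem_below.2 hi, rfl⟩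

theorem neg_mem_subtreeValues {b : ℤ} (hb : b ∈ subtreeValues r w i) :
    -b ∈ subtreeValues r w i :=
  neg_mem_pmValues hb

theorem zero_notMem_subtreeValues (hw : SignedInjective w) : (0 : ℤ) ∉ subtreeValues r w i :=
  zero_notMem_pmValues hw.1

theorem card_subtreeValues (hw : SignedInjective w) (i : Fin n) :
    #(subtreeValues r w i) = 2 * hook r i :=
  card_pmValues hw _

theorem acodeF_lt (hw : SignedInjective w) (hi : r i i) : acodeF r w i < 2 * hook r i := by
  have hsub : (subtreeValues r w i).filter (w i < ·) ⊆ (subtreeValues r w i).erase (w i) :=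
    fun b hb => mem_erase.2 ⟨(mem_filter.1 hb).2.ne', (mem_filter.1 hb).1⟩
  have hcard := card_le_card hsub
  have hpos := card_pos.2 ⟨w i, mem_subtreeValues_self (w := w) hi⟩
  rw [card_erase_of_mem (mem_subtreeValues_self hi)] at hcard
  rw [acodeF_eq_card_filter hw hi, ← card_subtreeValues hw]
  omega

theorem nextVal_mem (hi : r i i) : nextVal r w i ∈ subtreeValues r w i :=
  (cyclicPred_spec (mem_subtreeValues_self hi)).1

theorem eq_pivot (hw : SignedInjective w) {u : Fin n}
    (hu : (w u).natAbs = (nextVal r w i).natAbs) : u = pivot r w i := by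
  have h : ∃ u, (w u).natAbs = (nextVal r w i).natAbs := ⟨u, hu⟩
  rw [pivot, dif_pos h]
  exact hw.2 (hu.trans h.choose_spec.symm)

theorem pivot_spec (hw : SignedInjective w) (hi : r i i) :
    r (pivot r w i) i ∧ (w (pivot r w i)).natAbs = (nextVal r w i).natAbs := by
  obtain ⟨u, hu, habs⟩ := mem_pmValues.1 (nextVal_mem (w := w) hi)
  rw [← eq_pivot hw habs]
  exact ⟨mem_below.1 hu, habs⟩

theorem nextVal_ne_neg (hw : SignedInjective w) (hpi : pivot r w i ≠ i) :
    nextVal r w i ≠ -w i := fun h =>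
  hpi (eq_pivot hw (by rw [h, Int.natAbs_neg])).symm

theorem cyclicStep_self : cyclicStep r w i i = nextVal r w i := Function.update_self ..

theorem cyclicStep_pivot (hpi : pivot r w i ≠ i) :
    cyclicStep r w i (pivot r w i) = if w (pivot r w i) = nextVal r w i then w i else -w i := by
  rw [cyclicStep, Function.update_of_ne hpi, Function.update_self]

theorem cyclicStep_of_ne {v : Fin n} (hvi : v ≠ i) (hvp : v ≠ pivot r w i) :
    cyclicStep r w i v = w v := by
  rw [cyclicStep, Function.update_of_ne hvi, Function.update_of_ne hvp]

theorem natAbs_cyclicStep (hw : SignedInjective w) (hi : r i i) (v : Fin n) :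
    (cyclicStep r w i v).natAbs = (w (Equiv.swap i (pivot r w i) v)).natAbs := by
  have habs := (pivot_spec hw hi).2
  by_cases hvi : v = i
  · rw [hvi, cyclicStep_self, Equiv.swap_apply_left, habs]
  by_cases hvp : v = pivot r w i
  · rw [hvp, cyclicStep_pivot (hvp ▸ hvi), Equiv.swap_apply_right]
    split_ifs <;> simp
  · rw [cyclicStep_of_ne hvi hvp, Equiv.swap_apply_of_ne_of_ne hvi hvp]

theorem signedInjective_cyclicStep (hw : SignedInjective w) (hi : r i i) :
    SignedInjective (cyclicStep r w i) := by
  refine ⟨fun v h => hw.1 (Equiv.swap i (pivot r w i) v) ?_, fun u v h => ?_⟩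
  · have := natAbs_cyclicStep hw hi v
    rw [h] at this
    omega
  · simp only [natAbs_cyclicStep hw hi] at h
    exact (Equiv.swap i (pivot r w i)).injective (hw.2 h)

theorem subtreeValues_cyclicStep (hw : SignedInjective w) (hi : r i i) :
    subtreeValues r (cyclicStep r w i) i = subtreeValues r w i := by
  rw [subtreeValues, pmValues_congr fun u _ => natAbs_cyclicStep hw hi u,
    pmValues_comp_perm _ (Equiv.swap_apply_iff (P := (· ∈ below r i))
      (by simp only [mem_below, hi, (pivot_spec hw hi).1])), subtreeValues]

theorem acodeF_cyclicStep_self (hw : SignedInjective w) (hi : r i i) :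
    acodeF r (cyclicStep r w i) i = (acodeF r w i + 1) % (2 * hook r i) := by
  rw [acodeF_eq_card_filter (signedInjective_cyclicStep hw hi) hi, subtreeValues_cyclicStep hw hi,
    cyclicStep_self, nextVal, card_filter_cyclicPred_lt (mem_subtreeValues_self hi),
    ← acodeF_eq_card_filter hw hi, card_subtreeValues hw]

theorem countAbove_nextVal (hw : SignedInjective w) (hi : r i i) (hpi : pivot r w i ≠ i)
    {u : Fin n} (hu : r u i) (hui : u ≠ i) (hup : u ≠ pivot r w i) :
    countAbove (w i) (w u) = countAbove (nextVal r w i) (w u) ∧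
      countAbove (-w i) (w u) = countAbove (-nextVal r w i) (w u) ∧
      countAbove (w u) (w i) = countAbove (w u) (nextVal r w i) :=
  countAbove_cyclicPred (fun _ => neg_mem_subtreeValues) (zero_notMem_subtreeValues hw)
    (mem_subtreeValues_self hi) (nextVal_ne_neg hw hpi)
    (mem_pmValues.2 ⟨u, mem_below.2 hu, rfl⟩)
    (fun h => hui (hw.2 h)) (fun h => hup (eq_pivot hw h))

theorem pos_iff_pos_nextVal (hw : SignedInjective w) (hi : r i i) (hpi : pivot r w i ≠ i) :
    0 < w i ↔ 0 < nextVal r w i :=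
  (cyclicPred_of_ne_neg (fun _ => neg_mem_subtreeValues) (zero_notMem_subtreeValues hw)
    (mem_subtreeValues_self hi) (nextVal_ne_neg hw hpi)).2.1

theorem acodeF_eq_of_perm {w' : Fin n → ℤ} (σ : Equiv.Perm (Fin n))
    (hσ : ∀ u, strictR r (σ u) j ↔ strictR r u j) (hj : w' j = w j)
    (habs : ∀ u, (w' u).natAbs = (w (σ u)).natAbs) : acodeF r w' j = acodeF r w j := by
  rw [acodeF_eq_sum, acodeF_eq_sum, hj]
  congr 1
  exact sum_equiv σ (fun u => by rw [mem_strictBelow, mem_strictBelow, hσ])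
    fun u _ => countAbove_congr _ (habs u)

theorem acodeF_cyclicStep_pivot (hr : IsPartialOrder (Fin n) r) (hw : SignedInjective w)
    (hpi : pivot r w i ≠ i) :
    acodeF r (cyclicStep r w i) (pivot r w i) = acodeF r w (pivot r w i) := by
  have hi := hr.refl i
  obtain ⟨hp, habs⟩ := pivot_spec hw hi
  have hsign := pos_iff_pos_nextVal hw hi hpi
  have hx0 := hw.1 i
  have hp0 := hw.1 (pivot r w i)
  have hsame : ∀ u ∈ strictBelow r (pivot r w i),
      cyclicStep r w i u = w u ∧ r u i ∧ u ≠ i ∧ u ≠ pivot r w i := by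
    intro u hu
    obtain ⟨hup, hup'⟩ := mem_strictBelow.1 hu
    have hui : u ≠ i := by
      rintro rfl
      exact hpi (hr.antisymm _ _ hp hup)
    exact ⟨cyclicStep_of_ne hui hup', hr.trans _ _ _ hup hp, hui, hup'⟩
  rw [acodeF_eq_sum, acodeF_eq_sum, cyclicStep_pivot hpi]
  rcases Int.natAbs_eq_natAbs_iff.1 habs with hwp | hwp
  · rw [if_pos hwp, hwp]
    refine congrArg₂ (· + ·) (sum_congr rfl fun u hu => ?_) (by split_ifs <;> omega)
    obtain ⟨hwu, hu, hui, hup⟩ := hsame u hu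
    rw [hwu]
    exact (countAbove_nextVal hw hi hpi hu hui hup).1
  · have hne : w (pivot r w i) ≠ nextVal r w i := by omega
    rw [if_neg hne, hwp]
    refine congrArg₂ (· + ·) (sum_congr rfl fun u hu => ?_) (by split_ifs <;> omega)
    obtain ⟨hwu, hu, hui, hup⟩ := hsame u hu
    rw [hwu]
    exact (countAbove_nextVal hw hi hpi hu hui hup).2.1

theorem acodeF_cyclicStep_of_between (hi : r i i)
    (hchain : ∀ v u u', r v u → r v u' → r u u' ∨ r u' u) (hw : SignedInjective w)
    (hji : j ≠ i) (hjp : j ≠ pivot r w i) (hpj : strictR r (pivot r w i) j)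
    (hij : ¬strictR r i j) : acodeF r (cyclicStep r w i) j = acodeF r w j := by
  obtain ⟨hp, habs⟩ := pivot_spec hw hi
  have hpi : pivot r w i ≠ i := fun h => hij (h ▸ hpj)
  have hj : r j i := (hchain _ _ _ hpj.1 hp).resolve_right fun h => hij ⟨h, hji.symm⟩
  rw [acodeF_eq_sum, acodeF_eq_sum, cyclicStep_of_ne hji hjp]
  congr 1
  refine sum_congr rfl fun u hu => ?_
  have hui : u ≠ i := by
    rintro rfl
    exact hij (mem_strictBelow.1 hu)
  by_cases hup : u = pivot r w i
  · rw [hup, countAbove_congr _ (natAbs_cyclicStep hw hi _), Equiv.swap_apply_right,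
      countAbove_congr _ habs]
    exact (countAbove_nextVal hw hi hpi hj hji hjp).2.2
  · rw [cyclicStep_of_ne hui hup]

theorem acodeF_cyclicStep_of_ne (hr : IsPartialOrder (Fin n) r)
    (hchain : ∀ v u u', r v u → r v u' → r u u' ∨ r u' u) (hw : SignedInjective w)
    (hji : j ≠ i) : acodeF r (cyclicStep r w i) j = acodeF r w j := by
  have hi := hr.refl i
  obtain ⟨hp, -⟩ := pivot_spec hw hi
  by_cases hjp : j = pivot r w i
  · rw [hjp]
    exact acodeF_cyclicStep_pivot hr hw (hjp ▸ hji)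
  by_cases hbetween : strictR r (pivot r w i) j ∧ ¬strictR r i j
  · exact acodeF_cyclicStep_of_between hi hchain hw hji hjp hbetween.1 hbetween.2
  -- `i` and the pivot are both strictly below `j` or both not, so the swap permutes that set
  refine acodeF_eq_of_perm (Equiv.swap i (pivot r w i))
    (Equiv.swap_apply_iff (P := (strictR r · j)) ?_)
    (cyclicStep_of_ne hji hjp) (natAbs_cyclicStep hw hi)
  exact ⟨fun h => ⟨hr.trans _ _ _ hp h.1, fun h' => hjp h'.symm⟩,
    fun h => by_contra fun h' => hbetween ⟨h, h'⟩⟩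

theorem cyclicStep_neg_cyclicStep (hw : SignedInjective w) (hi : r i i) :
    cyclicStep r (-cyclicStep r w i) i = -w := by
  obtain ⟨-, habs⟩ := pivot_spec hw hi
  have hB : subtreeValues r (-cyclicStep r w i) i = subtreeValues r w i := by
    rw [← subtreeValues_cyclicStep hw hi]
    exact pmValues_congr fun u _ => Int.natAbs_neg _
  have hy : nextVal r (-cyclicStep r w i) i = -w i := by
    rw [nextVal, hB, Pi.neg_apply, cyclicStep_self, nextVal,
      cyclicPred_neg_cyclicPred (fun _ => neg_mem_subtreeValues) (mem_subtreeValues_self hi)]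
  have hp : pivot r (-cyclicStep r w i) i = pivot r w i := by
    refine (eq_pivot (signedInjective_neg (signedInjective_cyclicStep hw hi)) ?_).symm
    rw [hy, Pi.neg_apply, Int.natAbs_neg, Int.natAbs_neg, natAbs_cyclicStep hw hi,
      Equiv.swap_apply_right]
  funext v
  by_cases hvi : v = i
  · rw [hvi, cyclicStep_self, hy, Pi.neg_apply]
  by_cases hvp : v = pivot r w i
  · have hpi : pivot r w i ≠ i := hvp ▸ hvi
    have hx0 := hw.1 i
    rw [hvp, ← hp, cyclicStep_pivot (hp ▸ hpi), hp, hy]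
    simp only [Pi.neg_apply, cyclicStep_self, cyclicStep_pivot hpi]
    split_ifs <;> omega
  · rw [cyclicStep_of_ne hvi (hp ▸ hvp), Pi.neg_apply, cyclicStep_of_ne hvi hvp, Pi.neg_apply]

theorem eq_of_cyclicStep_eq {w₁ w₂ : Fin n → ℤ} (hw₁ : SignedInjective w₁)
    (hw₂ : SignedInjective w₂) (hi : r i i) (h : cyclicStep r w₁ i = cyclicStep r w₂ i) :
    w₁ = w₂ :=
  neg_injective <| by
    rw [← cyclicStep_neg_cyclicStep hw₁ hi, h, cyclicStep_neg_cyclicStep hw₂ hi]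

theorem natAbs_wVal (p : Equiv.Perm (Fin n) × (Fin n → Bool)) (v : Fin n) :
    (wVal p v).natAbs = p.1 v + 1 := by
  unfold wVal
  split <;> simp <;> omega

theorem signedInjective_wVal (p : Equiv.Perm (Fin n) × (Fin n → Bool)) :
    SignedInjective (wVal p) := by
  refine ⟨fun v h => ?_, fun u v h => p.1.injective (Fin.ext ?_)⟩
  · have := natAbs_wVal p v
    rw [h] at this
    omega
  · simp only [natAbs_wVal] at h
    omega

theorem wVal_injective : Function.Injective (wVal (n := n)) := by
  intro p q h
  have hperm : ∀ v, (p.1 v : ℕ) = q.1 v := fun v => by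
    have := natAbs_wVal p v
    rw [h, natAbs_wVal] at this
    omega
  refine Prod.ext (Equiv.ext fun v => Fin.ext (hperm v)) (funext fun v => ?_)
  have := hperm v
  have hv := congrFun h v
  simp only [wVal] at hv
  cases hp : p.2 v <;> cases hq : q.2 v <;> simp [hp, hq] at hv ⊢ <;> omega

def cyclicStepPair (r : Fin n → Fin n → Prop) (i : Fin n)
    (p : Equiv.Perm (Fin n) × (Fin n → Bool)) : Equiv.Perm (Fin n) × (Fin n → Bool) :=
  (p.1 * Equiv.swap i (pivot r (wVal p) i), fun v => decide (cyclicStep r (wVal p) i v < 0))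

theorem wVal_cyclicStepPair (hi : r i i) (p : Equiv.Perm (Fin n) × (Fin n → Bool)) :
    wVal (cyclicStepPair r i p) = cyclicStep r (wVal p) i := by
  funext v
  have habs := natAbs_cyclicStep (signedInjective_wVal p) hi v
  have hne := (signedInjective_cyclicStep (signedInjective_wVal p) hi).1 v
  rw [natAbs_wVal] at habs
  simp only [wVal, cyclicStepPair, Equiv.Perm.mul_apply]
  by_cases hneg : cyclicStep r (wVal p) i v < 0 <;> simp only [hneg, decide_true, decide_false,
    if_true, if_false, Bool.false_eq_true] <;> omega

theorem cyclicStepPair_injective (hi : r i i) : Function.Injective (cyclicStepPair r i) :=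
  fun p q h => wVal_injective (eq_of_cyclicStep_eq (signedInjective_wVal p)
    (signedInjective_wVal q) hi (by rw [← wVal_cyclicStepPair hi, h, wVal_cyclicStepPair hi]))

theorem acodeF_cyclicStepPair (hr : IsPartialOrder (Fin n) r)
    (hchain : ∀ v u u', r v u → r v u' → r u u' ∨ r u' u) (i : Fin n)
    (p : Equiv.Perm (Fin n) × (Fin n → Bool)) :
    acodeF r (wVal (cyclicStepPair r i p))
      = Function.update (acodeF r (wVal p)) i ((acodeF r (wVal p) i + 1) % (2 * hook r i)) := by
  funext j
  rw [wVal_cyclicStepPair (hr.refl i)]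
  rcases eq_or_ne j i with rfl | hji
  · rw [Function.update_self, acodeF_cyclicStep_self (signedInjective_wVal p) (hr.refl j)]
  · rw [Function.update_of_ne hji, acodeF_cyclicStep_of_ne hr hchain (signedInjective_wVal p) hji]

end SignedLabeling

end

/-- Exactly `n!/∏ h_v` signed labelings of `F` have any given A-code in `SE_F^B`. -/
theorem stmt7 (n : ℕ) (r : Fin n → Fin n → Prop) (hF : IsForest r)
    (a : Fin n → ℕ) (ha : ∀ i, a i ≤ 2 * hook r i - 1) :
    (Finset.univ.filter fun p : Equiv.Perm (Fin n) × (Fin n → Bool) =>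
        ∀ i, acodeF r (wVal p) i = a i).card
      = n.factorial / ∏ v : Fin n, hook r v := by
  obtain ⟨hr, hchain, -⟩ := hF
  have hhook : ∀ i, 0 < hook r i := fun i =>
    card_pos.2 ⟨i, mem_filter.2 ⟨mem_univ i, hr.refl i⟩⟩
  have hcount := card_fiber_mul_prod_eq_card (code := fun p => acodeF r (wVal p))
    (m := fun i => 2 * hook r i)
    (fun p i => SignedLabeling.acodeF_lt (SignedLabeling.signedInjective_wVal p) (hr.refl i))
    (fun i => SignedLabeling.cyclicStepPair_injective (hr.refl i))
    (SignedLabeling.acodeF_cyclicStepPair hr hchain)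
    (a := a) fun i => by have := ha i; have := hhook i; omega
  simp only [funext_iff, prod_mul_distrib, prod_const, card_univ, Fintype.card_fin,
    Fintype.card_prod, Fintype.card_perm, Fintype.card_fun, Fintype.card_bool] at hcount
  refine (Nat.div_eq_of_eq_mul_left (prod_pos fun i _ => hhook i) ?_).symm
  exact Nat.eq_of_mul_eq_mul_right (pow_pos two_pos n) (by rw [← hcount]; ring)
end

section
/- For all n ≥ 1, ∑_{σ ∈ S_n} q^{inv(σ)} ∏_{i ∈ Rlmin(σ)} t_i = ∏_{i=1}^{n} ([i]_q − 1 + t_i). -/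
open Finset

open scoped Classical

/-!
Every `σ ∈ S_{n+1}` is obtained in exactly one way from some `τ ∈ S_n` by inserting the new
largest letter `n + 1` at some position `k`. The inserted letter forms an inversion with each of
the `n - k` later positions and with nothing else; it is a right-to-left minimum only when it is
last; and it does not change which of the other letters are right-to-left minima. Summing over
`k` therefore multiplies the generating function of `S_n` by
`q ^ n + ⋯ + q + t (n + 1) = [n + 1]_q - 1 + t (n + 1)`.
-/

section InsertMax

variable {n : ℕ}

/-- Insert the new largest value `Fin.last n` into the one-line notation of `τ` at position `k`. -/
def insertMax (τ : Equiv.Perm (Fin n)) (k : Fin (n + 1)) : Equiv.Perm (Fin (n + 1)) :=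
  (finSuccEquiv' k).trans ((Equiv.optionCongr τ).trans (finSuccEquiv' (Fin.last n)).symm)

@[simp]
lemma insertMax_self (τ : Equiv.Perm (Fin n)) (k : Fin (n + 1)) :
    insertMax τ k k = Fin.last n := by
  simp [insertMax, finSuccEquiv'_at, finSuccEquiv'_symm_none]

@[simp]
lemma insertMax_succAbove (τ : Equiv.Perm (Fin n)) (k : Fin (n + 1)) (j : Fin n) :
    insertMax τ k (k.succAbove j) = (τ j).castSucc := by
  simp [insertMax, finSuccEquiv'_succAbove, finSuccEquiv'_symm_some, Fin.succAbove_last]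

lemma insertMax_bijective :
    Function.Bijective fun p : Equiv.Perm (Fin n) × Fin (n + 1) => insertMax p.1 p.2 := by
  rw [Fintype.bijective_iff_injective_and_card]
  refine ⟨?_, by simp [Fintype.card_perm, Nat.factorial_succ, Nat.mul_comm]⟩
  rintro ⟨τ, k⟩ ⟨τ', k'⟩ h
  simp only at h
  obtain rfl : k = k' := (insertMax τ' k').injective (by rw [insertMax_self, ← h, insertMax_self])
  obtain rfl : τ = τ' := Equiv.ext fun j =>
    Fin.castSucc_injective _ (by rw [← insertMax_succAbove, h, insertMax_succAbove])
  rfl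

lemma invP_eq_sum (σ : Equiv.Perm (Fin n)) :
    invP σ = ∑ i, ∑ j, if i < j ∧ σ j < σ i then 1 else 0 := by
  rw [invP, card_filter, Fintype.sum_prod_type]

lemma invP_insertMax (τ : Equiv.Perm (Fin n)) (k : Fin (n + 1)) :
    invP (insertMax τ k) = invP τ + (n - k) := by
  have later : ∑ b : Fin n, (if k < k.succAbove b then 1 else 0) = n - k := by
    have := Fin.sum_univ_succAbove (fun j => if k < j then 1 else 0) k
    simp only [lt_irrefl, if_false, zero_add] at this
    rw [← this, ← card_filter, filter_lt_eq_Ioi, Fin.card_Ioi, Nat.add_sub_cancel]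
  simp only [invP_eq_sum, Fin.sum_univ_succAbove _ k, insertMax_self, insertMax_succAbove,
    if_false, Fin.castSucc_lt_last, and_true, zero_add, Fin.succAbove_lt_succAbove_iff,
    Fin.castSucc_lt_castSucc_iff, not_lt.2 (Fin.le_last _), and_false]
  rw [later, add_comm]

lemma rlMin_insertMax_self_iff (τ : Equiv.Perm (Fin n)) (k : Fin (n + 1)) :
    (∀ j, k < j → insertMax τ k k < insertMax τ k j) ↔ k = Fin.last n := by
  rw [insertMax_self]
  refine ⟨fun h => ?_, fun hk j hj => absurd hj (hk ▸ not_lt.2 (Fin.le_last j))⟩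
  by_contra hk
  exact not_lt.2 (Fin.le_last _) (h _ (Fin.lt_last_iff_ne_last.2 hk))

lemma rlMin_insertMax_succAbove_iff (τ : Equiv.Perm (Fin n)) (k : Fin (n + 1)) (a : Fin n) :
    (∀ j, k.succAbove a < j → insertMax τ k (k.succAbove a) < insertMax τ k j) ↔
      ∀ b, a < b → τ a < τ b := by
  simp [Fin.forall_iff_succAbove k, Fin.castSucc_lt_last, Fin.succAbove_lt_succAbove_iff]

lemma prod_rlMin_insertMax {R : Type*} [CommMonoid R] (t : ℕ → R) (τ : Equiv.Perm (Fin n))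
    (k : Fin (n + 1)) :
    ∏ i ∈ univ.filter (fun i => ∀ j, i < j → insertMax τ k i < insertMax τ k j),
        t ((insertMax τ k i : ℕ) + 1)
      = (if k = Fin.last n then t (n + 1) else 1) *
        ∏ a ∈ univ.filter (fun a => ∀ b, a < b → τ a < τ b), t ((τ a : ℕ) + 1) := by
  rw [prod_filter, prod_filter, Fin.prod_univ_succAbove _ k]
  simp only [rlMin_insertMax_self_iff, rlMin_insertMax_succAbove_iff]
  simp

end InsertMax

lemma sum_pow_mul_ite_last {R : Type*} [CommRing R] (n : ℕ) (q t : R) :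
    ∑ k : Fin (n + 1), q ^ (n - k) * (if k = Fin.last n then t else 1)
      = qInt q (n + 1) - 1 + t := by
  rw [Fin.sum_univ_castSucc]
  simp only [Fin.val_castSucc, (Fin.castSucc_lt_last _).ne, ↓reduceIte, mul_one, Fin.val_last,
    tsub_self, pow_zero, one_mul, qInt, sum_range_succ', add_sub_cancel_right, add_left_inj]
  rw [Fin.sum_univ_eq_sum_range (fun i => q ^ (n - i)), ← sum_range_reflect]
  refine sum_congr rfl fun i hi => ?_
  have := mem_range.1 hi
  congr 1
  omega

theorem stmt12_general (n : ℕ) (R : Type*) [CommRing R] (q : R) (t : ℕ → R) :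
    ∑ σ : Equiv.Perm (Fin n),
        q ^ invP σ * ∏ i ∈ Finset.univ.filter (fun i : Fin n => ∀ j, i < j → σ i < σ j),
          t ((σ i : ℕ) + 1)
      = ∏ i ∈ Finset.range n, (qInt q (i + 1) - 1 + t (i + 1)) := by
  induction n with
  | zero => simp [invP]
  | succ n ih =>
    rw [← Fintype.sum_bijective _ insertMax_bijective _ _ fun _ => rfl, Fintype.sum_prod_type,
      prod_range_succ, ← ih, ← sum_pow_mul_ite_last, sum_mul_sum]
    refine sum_congr rfl fun τ _ => sum_congr rfl fun k _ => ?_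
    rw [invP_insertMax, prod_rlMin_insertMax, pow_add]
    ring

/-- Joint distribution of `(inv, Rlmin)` over `S_n`. -/
theorem stmt12 (n : ℕ) (hn : 1 ≤ n) (R : Type*) [CommRing R] (q : R) (t : ℕ → R) :
    ∑ σ : Equiv.Perm (Fin n),
        q ^ invP σ * ∏ i ∈ Finset.univ.filter (fun i : Fin n => ∀ j, i < j → σ i < σ j),
          t ((σ i : ℕ) + 1)
      = ∏ i ∈ Finset.range n, (qInt q (i + 1) - 1 + t (i + 1)) :=
  stmt12_general n R q t
end
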